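/- In a CFG, assume the node set Q provides next visibles and that every cycle contains a node of Q. Then every cycle-inducing node belongs to Q. -/

import Mathlib

namespace Slicing

/-- A path is a nonempty list of nodes, consecutive ones related by `succ`,
starting at `v` and ending at `v'`. -/
def IsPath {V : Type} (succ : V → V → Prop) (p : List V) (v v' : V) : Prop :=
  p.Chain' succ ∧ p.head? = some v ∧ p.getLast? = some v'

/-- A control-flow graph: an edge relation and an `End` node with no successors,
reachable from every node. -/
structure CFG (V : Type) where
  succ : V → V → Prop
  End : V
  end_no_succ : ∀ w, ¬ succ End w
  reach_end : ∀ v, ∃ p, IsPath succ p v End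

variable {V : Type}

/-- `v1` postdominates `v`. -/
def PD (G : CFG V) (v v1 : V) : Prop :=
  ∀ p, IsPath G.succ p v G.End → v1 ∈ p

/-- `v1` is a proper postdominator of `v`. -/
def ProperPD (G : CFG V) (v v1 : V) : Prop :=
  PD G v v1 ∧ v1 ≠ v

/-- `v1` is a first proper postdominator of `v`: every path from `v` to any other
proper postdominator of `v` contains `v1`. -/
def IsFPPD (G : CFG V) (v v1 : V) : Prop :=
  ProperPD G v v1 ∧
    ∀ v2, ProperPD G v v2 → v2 ≠ v1 → ∀ p, IsPath G.succ p v v2 → v1 ∈ p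

/-- Maximum number of edges of an acyclic path from `v` to `v'`. -/
noncomputable def LAP (G : CFG V) (v v' : V) : ℕ :=
  sSup {n | ∃ p, IsPath G.succ p v v' ∧ p.Nodup ∧ p.length = n + 1}

/-- A node is cycle-inducing if, with `v'` its first proper postdominator,
some successor `vi` of `v` satisfies `LAP vi v' ≥ LAP v v'`. -/
def CycleInducing (G : CFG V) (v : V) : Prop :=
  ∃ v', IsFPPD G v v' ∧ ∃ vi, G.succ v vi ∧ LAP G v v' ≤ LAP G vi v'

/-- `v` stays outside `Q` until `v'`: every path from `v` to `v'` in which `v'`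
occurs only at the final position contains no node of `Q` except possibly `v'`. -/
def StaysOutside (G : CFG V) (Q : Set V) (v v' : V) : Prop :=
  ∀ p, IsPath G.succ p v v' → v' ∉ p.dropLast → ∀ w ∈ p, w ∈ Q → w = v'

/-- `v2` is data dependent on `v1`. -/
def DataDep {Var : Type} (G : CFG V) (Def Use : V → Set Var) (v1 v2 : V) : Prop :=
  ∃ x, x ∈ Use v2 ∧ x ∈ Def v1 ∧
    ∃ p, IsPath G.succ p v1 v2 ∧ 2 ≤ p.length ∧ ∀ w ∈ p.tail.dropLast, x ∉ Def w

/-- `Q` is closed under data dependence. -/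
def ClosedDD {Var : Type} (G : CFG V) (Def Use : V → Set Var) (Q : Set V) : Prop :=
  ∀ v1 v2, v2 ∈ Q → DataDep G Def Use v1 v2 → v1 ∈ Q

/-- The `Q`-relevant variables at `v`. -/
def rv {Var : Type} (G : CFG V) (Def Use : V → Set Var) (Q : Set V) (v : V) : Set Var :=
  {x | ∃ v' ∈ Q, x ∈ Use v' ∧
    ∃ p, IsPath G.succ p v v' ∧ p.Nodup ∧ ∀ w ∈ p, w ≠ v' → x ∉ Def w}

/-- `v'` is a next visible in `Q` of `v`. -/
def IsNextVisible (G : CFG V) (Q : Set V) (v v' : V) : Prop :=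
  (v' ∈ Q ∨ v' = G.End) ∧
    ∀ u, (u ∈ Q ∨ u = G.End) → ∀ p, IsPath G.succ p v u → v' ∈ p

/-- `Q` provides next visibles. -/
def ProvidesNextVisibles (G : CFG V) (Q : Set V) : Prop :=
  ∀ v, ∃ v', IsNextVisible G Q v v'

/-- A weak slice set provides next visibles and is closed under data dependence. -/
def WeakSliceSet {Var : Type} (G : CFG V) (Def Use : V → Set Var) (Q : Set V) : Prop :=
  ProvidesNextVisibles G Q ∧ ClosedDD G Def Use Q

end Slicing

/-!
Let `v` be cycle-inducing, with `v' = fppd v` and a successor `vi` such that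
`LAP v v' ≤ LAP vi v'`. Prefixing `v` to a longest acyclic path from `vi` to `v'` gives a path
longer than `LAP v v'`, so that path already passes through `v`: this closes a cycle through `v`
that avoids `v'`. The cycle meets `Q`. The next visible `u` of `v` postdominates `v` and lies on
the cycle before a node of `Q`; if `u ≠ v`, then `u` is a proper postdominator, so it is
`v'` or is reached from `v` only through `v'`, which is impossible on that cycle. Hence `u = v`,
and `v ≠ End` because `v` has a successor, so `v ∈ Q`.
-/

namespace Slicing

section Paths

variable {V : Type} {r : V → V → Prop} {p : List V} {a b : V}

lemma IsPath.ne_nil (h : IsPath r p a b) : p ≠ [] := by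
  rintro rfl
  simp [IsPath] at h

lemma IsPath.getLast_mem (h : IsPath r p a b) : b ∈ p :=
  List.mem_of_getLast? h.2.2

lemma IsPath.cons {c : V} (hr : r c a) (h : IsPath r p a b) : IsPath r (c :: p) c b := by
  refine ⟨List.isChain_cons.2 ⟨fun y hy => ?_, h.1⟩, rfl, ?_⟩
  · rw [h.2.1, Option.mem_some_iff] at hy
    exact hy ▸ hr
  · rw [List.getLast?_cons, h.2.2]
    rfl

lemma IsPath.append_prefix {s t : List V} {x : V} (h : IsPath r (s ++ x :: t) a b) :
    IsPath r (s ++ [x]) a x := by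
  refine ⟨h.1.prefix ⟨t, by simp⟩, ?_, by simp⟩
  rw [← h.2.1]
  cases s <;> rfl

lemma IsPath.append_suffix {s t : List V} {x : V} (h : IsPath r (s ++ x :: t) a b) :
    IsPath r (x :: t) x b :=
  ⟨h.1.right_of_append, rfl, List.getLast?_append_cons s x t ▸ h.2.2⟩

lemma IsPath.exists_prefix_of_mem {x : V} (h : IsPath r p a b) (hx : x ∈ p) :
    ∃ q, IsPath r q a x ∧ q ⊆ p := by
  obtain ⟨s, t, rfl⟩ := List.append_of_mem hx
  refine ⟨s ++ [x], h.append_prefix, fun z hz => ?_⟩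
  simp only [List.mem_append, List.mem_cons, List.not_mem_nil, or_false] at hz ⊢
  tauto

lemma IsPath.exists_nodup (h : IsPath r p a b) : ∃ q, IsPath r q a b ∧ q.Nodup ∧ q ⊆ p := by
  induction p generalizing a with
  | nil => exact absurd rfl h.ne_nil
  | cons x l ih =>
    obtain rfl : x = a := Option.some_injective _ h.2.1
    cases l with
    | nil => exact ⟨[x], h, List.nodup_singleton x, fun _ hy => hy⟩
    | cons y l =>
      obtain ⟨q, hq, hqnd, hql⟩ := ih (a := y) ⟨h.1.tail, rfl, h.2.2⟩
      by_cases hxq : x ∈ q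
      · obtain ⟨s, t, rfl⟩ := List.append_of_mem hxq
        exact ⟨x :: t, hq.append_suffix, hqnd.sublist (List.sublist_append_right _ _),
          fun z hz => List.mem_cons_of_mem _ (hql (List.mem_append_right _ hz))⟩
      · exact ⟨x :: q, hq.cons (List.isChain_cons_cons.1 h.1).1, List.nodup_cons.2 ⟨hxq, hqnd⟩,
          List.cons_subset_cons _ hql⟩

end Paths

section LongestAcyclicPath

variable {V : Type} (G : CFG V) (v v' : V)

def acyclicLengths : Set ℕ :=
  {n | ∃ p, IsPath G.succ p v v' ∧ p.Nodup ∧ p.length = n + 1}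

lemma LAP_eq_sSup : LAP G v v' = sSup (acyclicLengths G v v') := rfl

variable {G v v'}

lemma IsPath.length_sub_one_mem_acyclicLengths {p : List V} (h : IsPath G.succ p v v')
    (hnd : p.Nodup) : p.length - 1 ∈ acyclicLengths G v v' :=
  ⟨p, h, hnd, (Nat.sub_add_cancel (List.length_pos_iff.2 h.ne_nil)).symm⟩

variable [Fintype V]

lemma bddAbove_acyclicLengths : BddAbove (acyclicLengths G v v') :=
  ⟨Fintype.card V, fun _ ⟨_, _, hnd, hlen⟩ => by have := hnd.length_le_card; omega⟩

lemma IsPath.length_le_LAP {p : List V} (h : IsPath G.succ p v v') (hnd : p.Nodup) :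
    p.length ≤ LAP G v v' + 1 := by
  have := le_csSup bddAbove_acyclicLengths (h.length_sub_one_mem_acyclicLengths hnd)
  rw [LAP_eq_sSup]
  omega

lemma IsPath.exists_length_eq_LAP {p : List V} (h : IsPath G.succ p v v') :
    ∃ q, IsPath G.succ q v v' ∧ q.Nodup ∧ q.length = LAP G v v' + 1 := by
  obtain ⟨q, hq, hnd, -⟩ := h.exists_nodup
  exact Nat.sSup_mem ⟨_, hq.length_sub_one_mem_acyclicLengths hnd⟩ bddAbove_acyclicLengths

end LongestAcyclicPath

section Postdominance

variable {V : Type} {G : CFG V} {v v' : V}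

lemma PD.exists_isPath (h : PD G v v') : ∃ p, IsPath G.succ p v v' := by
  obtain ⟨p, hp⟩ := G.reach_end v
  obtain ⟨q, hq, -⟩ := hp.exists_prefix_of_mem (h p hp)
  exact ⟨q, hq⟩

lemma ProperPD.pd_of_succ {w : V} (h : ProperPD G v v') (hw : G.succ v w) : PD G w v' :=
  fun _ hp => (List.mem_cons.1 (h.1 _ (hp.cons hw))).resolve_left h.2

lemma IsNextVisible.pd {Q : Set V} (h : IsNextVisible G Q v v') : PD G v v' :=
  h.2 G.End (Or.inr rfl)

lemma ProperPD.exists_cycle_not_mem [Fintype V] {vi : V} (h : ProperPD G v v')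
    (hvi : G.succ v vi) (hle : LAP G v v' ≤ LAP G vi v') :
    ∃ c, IsPath G.succ c v v ∧ 2 ≤ c.length ∧ v' ∉ c := by
  obtain ⟨p₀, hp₀⟩ := (h.pd_of_succ hvi).exists_isPath
  obtain ⟨p, hp, hnd, hlen⟩ := hp₀.exists_length_eq_LAP
  have hvp : v ∈ p := by
    by_contra hvp
    have := (hp.cons hvi).length_le_LAP (List.nodup_cons.2 ⟨hvp, hnd⟩)
    simp only [List.length_cons] at this
    omega
  obtain ⟨s, t, rfl⟩ := List.append_of_mem hvp
  have hv't : v' ∈ t := (List.mem_cons.1 hp.append_suffix.getLast_mem).resolve_left h.2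
  refine ⟨v :: (s ++ [v]), hp.append_prefix.cons hvi, by simp, ?_⟩
  rintro (_ | ⟨_, hv's⟩)
  · exact h.2 rfl
  · rw [List.append_cons] at hnd
    exact List.disjoint_of_nodup_append hnd hv's hv't

lemma IsFPPD.mem_of_isPath_of_mem {Q : Set V} {u w : V} {p : List V} (h : IsFPPD G v v')
    (hu : IsNextVisible G Q v u) (huv : u ≠ v) (hp : IsPath G.succ p v w) (hw : w ∈ Q) :
    v' ∈ p := by
  have hup : u ∈ p := hu.2 w (Or.inl hw) p hp
  by_cases hu' : u = v'
  · exact hu' ▸ hup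
  · obtain ⟨q, hq, hqp⟩ := hp.exists_prefix_of_mem hup
    exact hqp (h.2 u ⟨hu.pd, huv⟩ hu' q hq)

end Postdominance

/-- If `Q` provides next visibles and every cycle contains a node of `Q`,
then every cycle-inducing node belongs to `Q`. -/
theorem cycle_inducing_mem {V : Type} [Fintype V] (G : CFG V) (Q : Set V)
    (hpn : ProvidesNextVisibles G Q)
    (hcyc : ∀ u p, IsPath G.succ p u u → 2 ≤ p.length → ∃ w ∈ p, w ∈ Q)
    (v : V) (hci : CycleInducing G v) :
    v ∈ Q := by
  obtain ⟨v', hfppd, vi, hvi, hle⟩ := hci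
  obtain ⟨c, hc, hclen, hv'c⟩ := hfppd.1.exists_cycle_not_mem hvi hle
  obtain ⟨w, hwc, hwQ⟩ := hcyc v c hc hclen
  obtain ⟨u, hu⟩ := hpn v
  by_cases huv : u = v
  · subst huv
    exact hu.1.resolve_right fun hend => G.end_no_succ vi (hend ▸ hvi)
  · obtain ⟨q, hq, hqc⟩ := hc.exists_prefix_of_mem hwc
    exact absurd (hqc (hfppd.mem_of_isPath_of_mem hu huv hq hwQ)) hv'c

end Slicing
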